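/- For 0 ≤ s ≤ m, if an s-monotonic sequence r encodes a subfamily ℛ of 𝒥(0,s), then for every 0 ≤ i ≤ s, either α(ℛ,i,s) = α(r,i,s) and this common value lies in [0,v], or α(ℛ,i,s) ≥ α(r,i,s) = v+1. -/
import Mathlib


/-- The open real interval corresponding to an integer pair `(a, b)`. -/
def iv (p : ℤ × ℤ) : Set ℝ := Set.Ioo (p.1 : ℝ) (p.2 : ℝ)

/-- Two integer-endpoint open intervals intersect (share a point). -/
def Meets (p q : ℤ × ℤ) : Prop := (iv p ∩ iv q).Nonempty

/-- A vertebrate family: distinct open intervals with integer endpoints contained in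
`[0, m]`, containing the `m` unit intervals `(i-1, i)` for `1 ≤ i ≤ m`. -/
def Vertebrate (m : ℤ) (J : Finset (ℤ × ℤ)) : Prop :=
  (∀ p ∈ J, 0 ≤ p.1 ∧ p.1 < p.2 ∧ p.2 ≤ m) ∧
  (∀ i : ℤ, 1 ≤ i → i ≤ m → ((i - 1, i) : ℤ × ℤ) ∈ J)

/-- `Bar v R S` (written `ℛ∣𝒮`): every interval in `R` intersects at most `v`
pairwise disjoint intervals of `S` other than itself. -/
def Bar (v : ℕ) (R S : Finset (ℤ × ℤ)) : Prop :=
  ∀ p ∈ R, ∀ T ⊆ S.erase p,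
    ((T : Set (ℤ × ℤ)).Pairwise fun a b => ¬ Meets a b) →
    (∀ q ∈ T, Meets p q) → T.card ≤ v

/-- An (ordered) 2-partition of a family `S`. -/
def TwoPartition (P Q S : Finset (ℤ × ℤ)) : Prop := P ∪ Q = S ∧ Disjoint P Q

/-- A good 2-partition: each part satisfies `𝒮∣𝒮`. -/
def GoodPartition (v : ℕ) (P Q S : Finset (ℤ × ℤ)) : Prop :=
  TwoPartition P Q S ∧ Bar v P P ∧ Bar v Q Q

/-- `Jsub S l r` = the subfamily of intervals of `S` contained in `(l, r)`. -/
def Jsub (S : Finset (ℤ × ℤ)) (l r : ℤ) : Finset (ℤ × ℤ) :=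
  S.filter fun p => l ≤ p.1 ∧ p.2 ≤ r

/-- The subfamily of intervals of length at most `v`. -/
def Jle (v : ℕ) (S : Finset (ℤ × ℤ)) : Finset (ℤ × ℤ) := S.filter fun p => p.2 - p.1 ≤ (v : ℤ)

/-- The subfamily of intervals of length greater than `v`. -/
def Jgt (v : ℕ) (S : Finset (ℤ × ℤ)) : Finset (ℤ × ℤ) := S.filter fun p => (v : ℤ) < p.2 - p.1

/-- `Ksub S s` = the subfamily of intervals `(a, b) ∈ S` with `a < s < b`. -/
def Ksub (S : Finset (ℤ × ℤ)) (s : ℤ) : Finset (ℤ × ℤ) := S.filter fun p => p.1 < s ∧ s < p.2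

/-- `alphaF S l r` = maximum size of a subfamily of pairwise disjoint intervals of `S`
each of which intersects the interval `(l, r)`. -/
noncomputable def alphaF (S : Finset (ℤ × ℤ)) (l r : ℤ) : ℕ :=
  sSup {k : ℕ | ∃ T ⊆ S, T.card = k ∧
    ((T : Set (ℤ × ℤ)).Pairwise fun a b => ¬ Meets a b) ∧ ∀ p ∈ T, Meets p (l, r)}

/-- `idx v R u s` = the maximum `i ∈ [0, s]` such that `u ≤ alphaF R i s ≤ v + 1`,
or `-1` if no such index exists. -/
noncomputable def idx (v : ℕ) (R : Finset (ℤ × ℤ)) (u : ℕ) (s : ℤ) : ℤ :=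
  sSup (insert (-1) {i : ℤ | 0 ≤ i ∧ i ≤ s ∧ u ≤ alphaF R i s ∧ alphaF R i s ≤ v + 1})

/-- An `s`-monotonic sequence `r = ⟨r_0, …, r_{v+2}⟩`. -/
def SMonotonic (v : ℕ) (s : ℤ) (r : ℕ → ℤ) : Prop :=
  r 0 = s ∧ r (v + 2) = -1 ∧ (∀ u ≤ v + 1, r (u + 1) ≤ r u) ∧
  ∀ u ≤ v + 1, (r (u + 1) = -1 ∧ r u = -1) ∨ r (u + 1) < r u

/-- An `s`-monotonic sequence `r` encodes `R ⊆ 𝒥(0,s)` if `r_u = i(R, u, s)` for all `u`. -/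
def Encodes (v : ℕ) (r : ℕ → ℤ) (R : Finset (ℤ × ℤ)) (s : ℤ) : Prop :=
  ∀ u ≤ v + 2, r u = idx v R u s

/-- `alphaSeq v r i` = the maximum `u ∈ [0, v+1]` with `i ≤ r u`. -/
noncomputable def alphaSeq (v : ℕ) (r : ℕ → ℤ) (i : ℤ) : ℕ :=
  sSup {u : ℕ | u ≤ v + 1 ∧ i ≤ r u}

/-- `(l, r)` is a vertebrate range for the 2-partition `(P, Q)` of `𝒥(0,s)`:
all backbone unit intervals contained in `(l, r)` lie in the same part. -/
def VertRange (P Q : Finset (ℤ × ℤ)) (s l r : ℤ) : Prop :=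
  0 ≤ l ∧ l < r ∧ r ≤ s ∧
  ((∀ i : ℤ, l < i → i ≤ r → ((i - 1, i) : ℤ × ℤ) ∈ P) ∨
   (∀ i : ℤ, l < i → i ≤ r → ((i - 1, i) : ℤ × ℤ) ∈ Q))

/-- A maximal vertebrate range. -/
def MaxVertRange (P Q : Finset (ℤ × ℤ)) (s l r : ℤ) : Prop :=
  VertRange P Q s l r ∧
  ∀ l' r', VertRange P Q s l' r' → l' ≤ l → r ≤ r' → l' = l ∧ r' = r

/-- A 2-partition `(P, Q)` of `𝒥(0,s)` is basic if for every maximal vertebrate range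
`(l, r)` its induced 2-partition of `𝒥(l,r)` is `(𝒥_≤(l,r), 𝒥_>(l,r))` or the swap. -/
def Basic (v : ℕ) (J P Q : Finset (ℤ × ℤ)) (s : ℤ) : Prop :=
  ∀ l r : ℤ, MaxVertRange P Q s l r →
    (P ∩ Jsub J l r = Jle v (Jsub J l r) ∧ Q ∩ Jsub J l r = Jgt v (Jsub J l r)) ∨
    (P ∩ Jsub J l r = Jgt v (Jsub J l r) ∧ Q ∩ Jsub J l r = Jle v (Jsub J l r))

/-- `(p, q)` (a pair of `s`-monotonic sequences) extends `(p', q')` (a pair of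
`s'`-monotonic sequences) by the 2-partition `(E, F)` of `𝒦_{s'} ∖ 𝒦_s`. -/
def ExtendsBy (v : ℕ) (J : Finset (ℤ × ℤ)) (s' s : ℤ) (p q p' q' : ℕ → ℤ)
    (E F : Finset (ℤ × ℤ)) : Prop :=
  let D := Jgt v (Jsub J s' s)
  let w := alphaF D s' s
  let w' := alphaF (F ∪ D) s' s
  let d := (s - s').toNat
  (∀ u : ℕ, 1 ≤ u → u ≤ min d (v + 1) → p u = s - (u : ℤ)) ∧
  (∀ u : ℕ, d < u → u ≤ v + 1 → p u = p' (u - d)) ∧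
  (∀ u : ℕ, 1 ≤ u → u ≤ min w' (v + 1) → q u = idx v (F ∪ D) u s) ∧
  (∀ u : ℕ, w' < u → u ≤ v + 1 → q u = q' (u - w))

/-- The dynamic-programming predicate `Y(s, p, q, 𝒜, ℬ)`. -/
def Ypred (v : ℕ) (J : Finset (ℤ × ℤ)) (s : ℤ) (p q : ℕ → ℤ)
    (A B : Finset (ℤ × ℤ)) : Prop :=
  ∃ P Q : Finset (ℤ × ℤ), TwoPartition P Q (Jsub J 0 s) ∧
    Bar v P P ∧ Bar v Q Q ∧ Basic v J P Q s ∧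
    Encodes v p P s ∧ Encodes v q Q s ∧
    Bar v P (P ∪ A) ∧ Bar v Q (Q ∪ B) ∧
    (0 < s → ((s - 1, s) : ℤ × ℤ) ∈ P)

/-- Two intervals overlap significantly: their intersection has length at least `2v+1`. -/
def SigOverlap (v : ℕ) (p q : ℤ × ℤ) : Prop :=
  (2 * (v : ℤ) + 1) ≤ min p.2 q.2 - max p.1 q.1

/-- The significant-overlap graph `H` on a family `J`. -/
def Hgraph (v : ℕ) (J : Finset (ℤ × ℤ)) : SimpleGraph {p : ℤ × ℤ // p ∈ J} :=
  SimpleGraph.fromRel fun p q => SigOverlap v p.1 q.1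

lemma meets_iff (p q : ℤ × ℤ) : Meets p q ↔ max p.1 q.1 < min p.2 q.2 := by
  unfold Meets iv
  rw [Set.Ioo_inter_Ioo, Set.nonempty_Ioo]
  constructor <;> intro h
  · have : ((max p.1 q.1 : ℤ) : ℝ) < ((min p.2 q.2 : ℤ) : ℝ) := by push_cast; exact h
    exact_mod_cast this
  · have : ((max p.1 q.1 : ℤ) : ℝ) < ((min p.2 q.2 : ℤ) : ℝ) := by exact_mod_cast h
    push_cast at this; exact this

/-- The defining set of `alphaF`. -/
def ASet (S : Finset (ℤ × ℤ)) (l r : ℤ) : Set ℕ :=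
  {k : ℕ | ∃ T ⊆ S, T.card = k ∧
    ((T : Set (ℤ × ℤ)).Pairwise fun a b => ¬ Meets a b) ∧ ∀ p ∈ T, Meets p (l, r)}

lemma alphaF_eq (S : Finset (ℤ × ℤ)) (l r : ℤ) : alphaF S l r = sSup (ASet S l r) := rfl

lemma ASet_nonempty (S : Finset (ℤ × ℤ)) (l r : ℤ) : (ASet S l r).Nonempty :=
  ⟨0, ∅, by simp, by simp, by simp⟩

lemma ASet_bdd (S : Finset (ℤ × ℤ)) (l r : ℤ) : BddAbove (ASet S l r) := by
  refine ⟨S.card, fun k hk => ?_⟩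
  obtain ⟨T, hT, hc, -, -⟩ := hk
  exact hc ▸ Finset.card_le_card hT

lemma alphaF_spec (S : Finset (ℤ × ℤ)) (l r : ℤ) :
    ∃ T ⊆ S, T.card = alphaF S l r ∧
      ((T : Set (ℤ × ℤ)).Pairwise fun a b => ¬ Meets a b) ∧ ∀ p ∈ T, Meets p (l, r) :=
  Nat.sSup_mem (ASet_nonempty S l r) (ASet_bdd S l r)

lemma le_alphaF {S T : Finset (ℤ × ℤ)} {l r : ℤ} (hT : T ⊆ S)
    (hpw : (T : Set (ℤ × ℤ)).Pairwise fun a b => ¬ Meets a b)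
    (hm : ∀ p ∈ T, Meets p (l, r)) : T.card ≤ alphaF S l r :=
  le_csSup (ASet_bdd S l r) ⟨T, hT, rfl, hpw, hm⟩

lemma alphaF_anti {S : Finset (ℤ × ℤ)} {i i' s : ℤ} (h : i ≤ i') :
    alphaF S i' s ≤ alphaF S i s := by
  obtain ⟨T, hT, hc, hpw, hm⟩ := alphaF_spec S i' s
  rw [← hc]
  refine le_alphaF hT hpw fun p hp => ?_
  have := (meets_iff _ _).mp (hm p hp)
  rw [meets_iff]; simp only [Prod.fst, Prod.snd] at *; omega

lemma alphaF_self (S : Finset (ℤ × ℤ)) (s : ℤ) : alphaF S s s = 0 := by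
  obtain ⟨T, hT, hc, hpw, hm⟩ := alphaF_spec S s s
  rw [← hc, Finset.card_eq_zero]
  refine Finset.eq_empty_iff_forall_notMem.mpr fun p hp => ?_
  have := (meets_iff _ _).mp (hm p hp)
  simp only [Prod.fst, Prod.snd] at this; omega

lemma alphaF_drop (S : Finset (ℤ × ℤ)) (j s : ℤ) :
    alphaF S j s ≤ alphaF S (j + 1) s + 1 := by
  obtain ⟨T, hT, hc, hpw, hm⟩ := alphaF_spec S j s
  by_cases h : ∀ p ∈ T, Meets p (j + 1, s)
  · have := le_alphaF hT hpw h; omega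
  · push_neg at h
    obtain ⟨p0, hp0T, hp0⟩ := h
    have key : ∀ q ∈ T, q ≠ p0 → Meets q (j + 1, s) := by
      intro q hqT hne
      by_contra hq
      have h1 := (meets_iff _ _).mp (hm p0 hp0T)
      have h2 := (meets_iff _ _).mp (hm q hqT)
      rw [meets_iff] at hp0 hq
      have hqp : ¬ Meets q p0 := hpw (by exact_mod_cast hqT) (by exact_mod_cast hp0T) hne
      rw [meets_iff] at hqp
      simp only [Prod.fst, Prod.snd] at *
      omega
    have hsub : T.erase p0 ⊆ S := (Finset.erase_subset _ _).trans hT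
    have hle : (T.erase p0).card ≤ alphaF S (j + 1) s := by
      refine le_alphaF hsub (hpw.mono (by simp [Finset.coe_subset, Finset.erase_subset]))
        fun p hp => key p (Finset.mem_of_mem_erase hp) (Finset.ne_of_mem_erase hp)
    have hcard : (T.erase p0).card = T.card - 1 := Finset.card_erase_of_mem hp0T
    have hpos : 1 ≤ T.card := Finset.card_pos.mpr ⟨p0, hp0T⟩
    omega

lemma alphaF_ivt (S : Finset (ℤ × ℤ)) (s : ℤ) (c : ℕ) :
    ∀ n : ℕ, ∀ i : ℤ, i ≤ s → (s - i).toNat = n → c ≤ alphaF S i s →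
      ∃ j, i ≤ j ∧ j ≤ s ∧ alphaF S j s = c := by
  intro n
  induction n with
  | zero =>
    intro i his hn hc
    have hi : i = s := by omega
    rw [hi, alphaF_self] at hc
    exact ⟨s, by omega, le_refl _, by rw [alphaF_self]; omega⟩
  | succ n ih =>
    intro i his hn hc
    rcases eq_or_lt_of_le hc with heq | hlt
    · exact ⟨i, le_refl _, his, heq.symm⟩
    · have hdrop := alphaF_drop S i s
      have his' : i + 1 ≤ s := by omega
      obtain ⟨j, hj1, hj2, hj3⟩ := ih (i + 1) his' (by omega) (by omega)
      exact ⟨j, by omega, hj2, hj3⟩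

/-- The defining set of `idx`. -/
def ISet (v : ℕ) (R : Finset (ℤ × ℤ)) (u : ℕ) (s : ℤ) : Set ℤ :=
  insert (-1) {i : ℤ | 0 ≤ i ∧ i ≤ s ∧ u ≤ alphaF R i s ∧ alphaF R i s ≤ v + 1}

lemma idx_eq (v : ℕ) (R : Finset (ℤ × ℤ)) (u : ℕ) (s : ℤ) :
    idx v R u s = sSup (ISet v R u s) := rfl

lemma ISet_bdd {v : ℕ} {R : Finset (ℤ × ℤ)} {u : ℕ} {s : ℤ} (hs : 0 ≤ s) :
    s ∈ upperBounds (ISet v R u s) := by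
  rintro x (rfl | hx)
  · omega
  · exact hx.2.1

lemma le_idx {v : ℕ} {R : Finset (ℤ × ℤ)} {u : ℕ} {s i : ℤ} (hs : 0 ≤ s)
    (hi : 0 ≤ i ∧ i ≤ s ∧ u ≤ alphaF R i s ∧ alphaF R i s ≤ v + 1) :
    i ≤ idx v R u s :=
  le_csSup ⟨s, ISet_bdd hs⟩ (Set.mem_insert_of_mem _ hi)

lemma idx_mem {v : ℕ} {R : Finset (ℤ × ℤ)} {u : ℕ} {s : ℤ} (hs : 0 ≤ s) :
    idx v R u s ∈ ISet v R u s := by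
  obtain ⟨ub, hub, hmax⟩ := Int.exists_greatest_of_bdd (P := fun z => z ∈ ISet v R u s)
    ⟨s, fun z hz => ISet_bdd hs hz⟩ ⟨-1, Set.mem_insert _ _⟩
  have : idx v R u s = ub := IsGreatest.csSup_eq ⟨hub, fun z hz => hmax z hz⟩
  rw [this]; exact hub

/-- If an `s`-monotonic sequence `r` encodes a subfamily `R` of `J(0,s)`, then for
every `0 ≤ i ≤ s`, either `α(R, i, s) = α(r, i, s)` with common value in `[0, v]`,
or `α(R, i, s) ≥ α(r, i, s) = v + 1`. -/
theorem alpha_of_encoding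
    (v : ℕ) (hv : 1 ≤ v) (m : ℤ) (hm : 1 ≤ m)
    (J : Finset (ℤ × ℤ)) (hJ : Vertebrate m J)
    (s : ℤ) (hs0 : 0 ≤ s) (hsm : s ≤ m)
    (R : Finset (ℤ × ℤ)) (hR : R ⊆ Jsub J 0 s)
    (r : ℕ → ℤ) (hmono : SMonotonic v s r) (henc : Encodes v r R s)
    (i : ℤ) (hi0 : 0 ≤ i) (his : i ≤ s) :
    (alphaF R i s = alphaSeq v r i ∧ alphaSeq v r i ≤ v) ∨
    (alphaSeq v r i ≤ alphaF R i s ∧ alphaSeq v r i = v + 1) := by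
  set U : Set ℕ := {u : ℕ | u ≤ v + 1 ∧ i ≤ r u} with hU
  have h0U : 0 ∈ U := ⟨by omega, by rw [hmono.1]; exact his⟩
  have hUbdd : BddAbove U := ⟨v + 1, fun u hu => hu.1⟩
  have hmem : alphaSeq v r i ∈ U := Nat.sSup_mem ⟨0, h0U⟩ hUbdd
  set u : ℕ := alphaSeq v r i with hu
  obtain ⟨huv, hiru⟩ := hmem
  -- Step A : u ≤ alphaF R i s
  have hru : r u = idx v R u s := henc u (by omega)
  have hidx : idx v R u s ∈ ISet v R u s := idx_mem hs0
  have hA : u ≤ alphaF R i s := by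
    rcases hidx with h1 | h1
    · rw [hru, h1] at hiru; omega
    · obtain ⟨hj0, hjs, hju, hjv⟩ := h1
      rw [hru] at hiru
      exact le_trans hju (alphaF_anti hiru)
  -- Step B
  rcases Nat.lt_or_ge u (v + 1) with hcase | hcase
  · left
    refine ⟨?_, by omega⟩
    by_contra hne
    have hgt : u + 1 ≤ alphaF R i s := by omega
    -- find j ∈ [i, s] with alphaF R j s = min (alphaF R i s) (v+1)
    set c : ℕ := min (alphaF R i s) (v + 1) with hc
    obtain ⟨j, hj1, hj2, hj3⟩ := alphaF_ivt R s c (s - i).toNat i his rfl (by omega)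
    have hjset : 0 ≤ j ∧ j ≤ s ∧ (u + 1) ≤ alphaF R j s ∧ alphaF R j s ≤ v + 1 :=
      ⟨by omega, hj2, by omega, by omega⟩
    have : j ≤ idx v R (u + 1) s := le_idx hs0 hjset
    have hru1 : r (u + 1) = idx v R (u + 1) s := henc (u + 1) (by omega)
    have : u + 1 ∈ U := ⟨by omega, by rw [hru1]; omega⟩
    have hle := le_csSup hUbdd this
    have hsup : sSup U = u := rfl
    omega
  · right
    exact ⟨hA, by omega⟩
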